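/- arXiv:2310.05611 — 2 statements merged into one kernel-verified Lean document; each statement's English description precedes it below -/
import Mathlib

section
/- Let $l \ge 1$ be a natural number, let $w_1, \dots, w_l \in \mathbb{C}$, let $z_1, \dots, z_l \in \mathbb{C}$ with $|z_m| = 1$ for all $m$, and let $R > 0$. Then there exists $b \in \mathbb{C}$ with $|b| \le 2 l R$ such that $|w_m + b z_m| \ge R$ for every $m = 1, \dots, l$. -/
/-!
Try the `l + 1` radii `b = 0, 2R, 4R, …, 2lR`. For a fixed `m` the points `b z_m` are `2R` apart,
so at most one of them lies in the open disc of radius `R` about `-w_m`. The `l` indices `m` thus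
rule out at most `l` candidates, and one of them remains.
-/

open Finset

theorem le_norm_add_of_two_mul_le_norm_sub {E : Type*} [SeminormedAddCommGroup E] {R : ℝ}
    {a x y : E} (hxy : 2 * R ≤ ‖x - y‖) (hx : ‖a + x‖ < R) : R ≤ ‖a + y‖ := by
  have : ‖x - y‖ ≤ ‖a + x‖ + ‖a + y‖ := by
    simpa using norm_sub_le (a + x) (a + y)
  linarith

theorem Fintype.exists_forall_not_of_subsingleton_of_card_lt {ι κ : Type*} [Fintype ι] [Fintype κ]
    (bad : κ → ι → Prop) (hbad : ∀ m, {k | bad m k}.Subsingleton)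
    (hcard : Fintype.card κ < Fintype.card ι) : ∃ k, ∀ m, ¬ bad m k := by
  classical
  set B := univ.biUnion fun m => univ.filter (bad m)
  have hB : #B < #(univ : Finset ι) :=
    calc #B ≤ ∑ m, #(univ.filter (bad m)) := card_biUnion_le
      _ ≤ ∑ _m : κ, 1 := sum_le_sum fun m _ =>
          card_le_one.2 fun k hk k' hk' => hbad m (by simpa using hk) (by simpa using hk')
      _ < #(univ : Finset ι) := by simpa using hcard
  obtain ⟨k, -, hk⟩ := exists_mem_notMem_of_card_lt_card hB
  exact ⟨k, fun m hm => hk (mem_biUnion.2 ⟨m, mem_univ _, by simpa using hm⟩)⟩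

theorem two_mul_le_norm_sub_of_ne {R : ℝ} (hR : 0 ≤ R) {z : ℂ} (hz : ‖z‖ = 1) {k k' : ℕ}
    (hk : k ≠ k') : 2 * R ≤ ‖((2 * k * R : ℝ) : ℂ) * z - ((2 * k' * R : ℝ) : ℂ) * z‖ := by
  have hdist : (1 : ℝ) ≤ |(k : ℝ) - k'| := by
    exact_mod_cast Int.one_le_abs (sub_ne_zero.2 (Int.natCast_inj.not.2 hk) : (k : ℤ) - k' ≠ 0)
  rw [← sub_mul, norm_mul, hz, mul_one, ← Complex.ofReal_sub, Complex.norm_real, Real.norm_eq_abs,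
    show 2 * k * R - 2 * k' * R = 2 * R * ((k : ℝ) - k') by ring, abs_mul,
    abs_of_nonneg (by positivity : 0 ≤ 2 * R)]
  nlinarith

theorem stmt1_general (l : ℕ) (w z : Fin l → ℂ)
    (hz : ∀ m, ‖z m‖ = 1) (R : ℝ) (hR : 0 < R) :
    ∃ b : ℂ, ‖b‖ ≤ 2 * l * R ∧ ∀ m, R ≤ ‖w m + b * z m‖ := by
  obtain ⟨k, hk⟩ := Fintype.exists_forall_not_of_subsingleton_of_card_lt
    (fun m (k : Fin (l + 1)) => ‖w m + ((2 * (k : ℕ) * R : ℝ) : ℂ) * z m‖ < R)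
    (fun m k hk k' hk' => Fin.ext <| by_contra fun hne => (hk'.trans_le <|
      le_norm_add_of_two_mul_le_norm_sub (two_mul_le_norm_sub_of_ne hR.le (hz m) hne) hk).false)
    (by simp)
  refine ⟨(2 * (k : ℕ) * R : ℝ), ?_, fun m => not_lt.1 (hk m)⟩
  have hkl : ((k : ℕ) : ℝ) ≤ l := by exact_mod_cast Nat.lt_succ_iff.1 k.isLt
  rw [Complex.norm_real, Real.norm_eq_abs, abs_of_nonneg (by positivity)]
  nlinarith

/-- Given `l ≥ 1` points `w_1, …, w_l ∈ ℂ`, unimodular `z_1, …, z_l`, and `R > 0`, there is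
`b ∈ ℂ` with `|b| ≤ 2lR` such that `|w_m + b z_m| ≥ R` for every `m`. -/
theorem stmt1 (l : ℕ) (hl : 1 ≤ l) (w z : Fin l → ℂ)
    (hz : ∀ m, ‖z m‖ = 1) (R : ℝ) (hR : 0 < R) :
    ∃ b : ℂ, ‖b‖ ≤ 2 * l * R ∧ ∀ m, R ≤ ‖w m + b * z m‖ :=
  stmt1_general l w z hz R hR
end

section
/- Let $h$ be a positive harmonic function on the open unit disc $\mathbb{D}$, let $\zeta_1 \ne \zeta_2$ be points of $\mathbb{T}$, and let $I$ be a closed subarc of $\mathbb{T}$ with endpoints $\zeta_1$ and $\zeta_2$. Let $f$ be holomorphic on $\mathbb{D}$ with $|f(r\zeta_i)| \le e^{h(r\zeta_i)}$ for all $0 \le r < 1$ and $i = 1,2$. Suppose further that there is a sequence $r_n \to 1^-$ in $[0,1)$ with $|f(r_n \zeta)| \le 1$ for all $\zeta \in I$ and all $n$. Then $|f| \le e^{h}$ on the entire sector $\{r\zeta : 0 \le r < 1,\ \zeta \in I\}$. -/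
/-!
Since `h` is harmonic on the disc, `h = Re F` for some `F` holomorphic there, and
`G = f e^{-F}` is holomorphic with `|G| = |f| e^{-h}`. On each polar rectangle
`{s e^{iφ} : 0 ≤ s ≤ r_n, θ₁ ≤ φ ≤ θ₂}` we have `|G| ≤ 1` on the two radii by hypothesis and on
the outer arc because `|f| ≤ 1 ≤ e^h` there, so `|G| ≤ 1` on the whole rectangle by the maximum
principle. Every point of the sector lies in such a rectangle since `r_n → 1`.
-/

open Filter

/-- `h` is harmonic on `s`: twice continuously differentiable with vanishing Laplacian
`∂²h/∂x² + ∂²h/∂y² = 0`. -/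
def HarmonicOn (h : ℂ → ℝ) (s : Set ℂ) : Prop :=
  ContDiffOn ℝ 2 h s ∧ ∀ z ∈ s,
    fderiv ℝ (fun w => fderiv ℝ h w 1) z 1
      + fderiv ℝ (fun w => fderiv ℝ h w Complex.I) z Complex.I = 0

open Complex Metric Set InnerProductSpace

theorem HarmonicOn.harmonicOnNhd {h : ℂ → ℝ} {s : Set ℂ} (hs : IsOpen s) (hh : HarmonicOn h s) :
    HarmonicOnNhd h s := by
  intro x hx
  refine ⟨hh.1.contDiffAt (hs.mem_nhds hx), ?_⟩
  filter_upwards [hs.mem_nhds hx] with y hy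
  have hd : DifferentiableAt ℝ (fderiv ℝ h) y :=
    ((hh.1.contDiffAt (hs.mem_nhds hy)).fderiv_right (m := 1) le_rfl).differentiableAt one_ne_zero
  have hvv (v : ℂ) : fderiv ℝ (fun w => fderiv ℝ h w v) y v = fderiv ℝ (fderiv ℝ h) y v v := by
    simp [fderiv_clm_apply hd (differentiableAt_const v)]
  simpa [laplacian_eq_iteratedFDeriv_complexPlane, iteratedFDeriv_two_apply, hvv] using hh.2 y hy

def polarRect (ρ θ₁ θ₂ : ℝ) : Set ℂ :=
  (fun p : ℝ × ℝ => (p.1 : ℂ) * exp (p.2 * I)) '' (Icc 0 ρ ×ˢ Icc θ₁ θ₂)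

theorem polarRect_subset_closedBall (ρ θ₁ θ₂ : ℝ) : polarRect ρ θ₁ θ₂ ⊆ closedBall 0 ρ := by
  rintro _ ⟨⟨s, φ⟩, ⟨⟨hs, hsρ⟩, -⟩, rfl⟩
  simpa [norm_exp_ofReal_mul_I, abs_of_nonneg hs] using hsρ

theorem isCompact_polarRect (ρ θ₁ θ₂ : ℝ) : IsCompact (polarRect ρ θ₁ θ₂) :=
  (isCompact_Icc.prod isCompact_Icc).image (by fun_prop)

theorem mem_interior_polarRect {ρ θ₁ θ₂ s φ : ℝ} (hs : 0 < s) (hsρ : s < ρ) (hφ₁ : θ₁ < φ)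
    (hφ₂ : φ < θ₂) : (s : ℂ) * exp (φ * I) ∈ interior (polarRect ρ θ₁ θ₂) := by
  set U : Set ℂ := re ⁻¹' Iio (Real.log ρ) ∩ im ⁻¹' Ioo θ₁ θ₂
  have hU : IsOpen U :=
    (isOpen_Iio.preimage continuous_re).inter (isOpen_Ioo.preimage continuous_im)
  have hUK : exp '' U ⊆ polarRect ρ θ₁ θ₂ := by
    rintro _ ⟨w, ⟨hre, him⟩, rfl⟩
    refine ⟨(Real.exp w.re, w.im), ⟨⟨(Real.exp_pos _).le, ?_⟩, him.1.le, him.2.le⟩, ?_⟩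
    · exact ((Real.lt_log_iff_exp_lt (by linarith)).1 hre).le
    · simp only [ofReal_exp, ← exp_add, re_add_im]
  refine interior_maximal hUK (isOpenMap_exp U hU) ⟨Real.log s + φ * I, ⟨?_, ?_⟩, ?_⟩
  · simpa using Real.log_lt_log hs hsρ
  · simpa using ⟨hφ₁, hφ₂⟩
  · rw [exp_add, ← ofReal_exp, Real.exp_log hs]

theorem norm_le_on_polarRect_of_edges {F : Type*} [NormedAddCommGroup F] [NormedSpace ℂ F]
    {G : ℂ → F} {ρ θ₁ θ₂ C : ℝ} (hG : DifferentiableOn ℂ G (polarRect ρ θ₁ θ₂))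
    (harc : ∀ φ ∈ Icc θ₁ θ₂, ‖G (ρ * exp (φ * I))‖ ≤ C)
    (hrad₁ : ∀ s ∈ Icc 0 ρ, ‖G (s * exp (θ₁ * I))‖ ≤ C)
    (hrad₂ : ∀ s ∈ Icc 0 ρ, ‖G (s * exp (θ₂ * I))‖ ≤ C) :
    ∀ z ∈ polarRect ρ θ₁ θ₂, ‖G z‖ ≤ C := by
  set K := polarRect ρ θ₁ θ₂
  have hK : IsClosed K := (isCompact_polarRect ρ θ₁ θ₂).isClosed
  -- Off the edges every point is interior, so the frontier of `interior K` lies on the edges.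
  have interior_or_le : ∀ z ∈ K, z ∈ interior K ∨ ‖G z‖ ≤ C := by
    rintro _ ⟨⟨s, φ⟩, ⟨⟨hs, hsρ⟩, hφ₁, hφ₂⟩, rfl⟩
    dsimp only
    rcases hs.eq_or_lt with rfl | hs
    · right; simpa using hrad₁ 0 ⟨le_rfl, hsρ⟩
    rcases hsρ.eq_or_lt with rfl | hsρ
    · exact .inr (harc φ ⟨hφ₁, hφ₂⟩)
    rcases hφ₁.eq_or_lt with rfl | hφ₁
    · exact .inr (hrad₁ s ⟨hs.le, hsρ.le⟩)
    rcases hφ₂.eq_or_lt with rfl | hφ₂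
    · exact .inr (hrad₂ s ⟨hs.le, hsρ.le⟩)
    exact .inl (mem_interior_polarRect hs hsρ hφ₁ hφ₂)
  have hcl : closure (interior K) ⊆ K := closure_minimal interior_subset hK
  intro z hz
  refine (interior_or_le z hz).elim (fun hzi => ?_) id
  refine norm_le_of_forall_mem_frontier_norm_le
    ((isCompact_polarRect ρ θ₁ θ₂).isBounded.subset interior_subset)
    ⟨hG.mono interior_subset, hG.continuousOn.mono hcl⟩ (fun w hw => ?_) (subset_closure hzi)
  rw [isOpen_interior.frontier_eq] at hw
  exact (interior_or_le w (hcl hw.1)).resolve_left hw.2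

theorem norm_mul_exp_neg_le_one_iff (a w : ℂ) : ‖a * exp (-w)‖ ≤ 1 ↔ ‖a‖ ≤ Real.exp w.re := by
  rw [norm_mul, norm_exp, neg_re, Real.exp_neg, ← div_eq_mul_inv, div_le_one (Real.exp_pos _)]

theorem stmt16_general (h : ℂ → ℝ) (hharm : HarmonicOn h (Metric.ball (0 : ℂ) 1))
    (hpos : ∀ z ∈ Metric.ball (0 : ℂ) 1, 0 < h z)
    (θ₁ θ₂ : ℝ)
    (ζ₁ ζ₂ : ℂ) (hζ₁ : ζ₁ = Complex.exp (θ₁ * Complex.I))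
    (hζ₂ : ζ₂ = Complex.exp (θ₂ * Complex.I))
    (I : Set ℂ) (hI : I = (fun θ : ℝ => Complex.exp (θ * Complex.I)) '' Set.Icc θ₁ θ₂)
    (f : ℂ → ℂ) (hf : DifferentiableOn ℂ f (Metric.ball (0 : ℂ) 1))
    (hrad : ∀ r : ℝ, 0 ≤ r → r < 1 →
      ‖f ((r : ℂ) * ζ₁)‖ ≤ Real.exp (h ((r : ℂ) * ζ₁)) ∧
      ‖f ((r : ℂ) * ζ₂)‖ ≤ Real.exp (h ((r : ℂ) * ζ₂)))
    (rn : ℕ → ℝ) (hrn1 : ∀ n, rn n < 1)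
    (hrnlim : Tendsto rn atTop (nhds 1))
    (harc : ∀ n, ∀ ζ ∈ I, ‖f ((rn n : ℂ) * ζ)‖ ≤ 1) :
    ∀ r : ℝ, 0 ≤ r → r < 1 → ∀ ζ ∈ I,
      ‖f ((r : ℂ) * ζ)‖ ≤ Real.exp (h ((r : ℂ) * ζ)) := by
  subst hζ₁ hζ₂ hI
  rintro r hr0 hr1 _ ⟨φ, hφ, rfl⟩
  obtain ⟨F, hFan, hFre⟩ := (hharm.harmonicOnNhd isOpen_ball).exists_analyticOnNhd_ball_re_eq
  have hGf : ∀ z ∈ ball (0 : ℂ) 1, ‖f z * exp (-F z)‖ ≤ 1 ↔ ‖f z‖ ≤ Real.exp (h z) :=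
    fun z hz => hFre hz ▸ norm_mul_exp_neg_le_one_iff (f z) (F z)
  obtain ⟨n, hn⟩ := (hrnlim.eventually (eventually_gt_nhds hr1)).exists
  have hK : polarRect (rn n) θ₁ θ₂ ⊆ ball 0 1 :=
    (polarRect_subset_closedBall _ _ _).trans (closedBall_subset_ball (hrn1 n))
  have hmem {s ψ : ℝ} (hs : s ∈ Icc 0 (rn n)) (hψ : ψ ∈ Icc θ₁ θ₂) :
      (s : ℂ) * exp (ψ * I) ∈ ball (0 : ℂ) 1 := hK ⟨(s, ψ), ⟨hs, hψ⟩, rfl⟩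
  refine (hGf _ (hmem ⟨hr0, hn.le⟩ hφ)).1 <| norm_le_on_polarRect_of_edges
    ((hf.mul hFan.differentiableOn.neg.cexp).mono hK) (fun ψ hψ => ?_) (fun s hs => ?_)
    (fun s hs => ?_) _ ⟨(r, φ), ⟨⟨hr0, hn.le⟩, hφ⟩, rfl⟩
  · have hz := hmem ⟨hr0.trans hn.le, le_rfl⟩ hψ
    exact (hGf _ hz).2 <| (harc n _ ⟨ψ, hψ, rfl⟩).trans (Real.one_le_exp (hpos _ hz).le)
  · exact (hGf _ (hmem hs ⟨le_rfl, hφ.1.trans hφ.2⟩)).2 (hrad s hs.1 (hs.2.trans_lt (hrn1 n))).1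
  · exact (hGf _ (hmem hs ⟨hφ.1.trans hφ.2, le_rfl⟩)).2 (hrad s hs.1 (hs.2.trans_lt (hrn1 n))).2

/-- Maximum-principle estimate on a sector: let `h > 0` be harmonic on the disc, let
`I = {e^{iθ} : θ ∈ [θ₁, θ₂]}` be a closed subarc with endpoints `ζ₁ = e^{iθ₁} ≠ ζ₂ = e^{iθ₂}`,
and let `f` be holomorphic on the disc with `|f| ≤ e^h` on the two radii `[0,ζ₁)`, `[0,ζ₂)`
and `|f| ≤ 1` on the arcs `r_n I` for some sequence `r_n → 1⁻`. Then `|f| ≤ e^h` on the whole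
sector `{rζ : 0 ≤ r < 1, ζ ∈ I}`. -/
theorem stmt16 (h : ℂ → ℝ) (hharm : HarmonicOn h (Metric.ball (0 : ℂ) 1))
    (hpos : ∀ z ∈ Metric.ball (0 : ℂ) 1, 0 < h z)
    (θ₁ θ₂ : ℝ) (hθ : θ₁ < θ₂) (hθ2 : θ₂ - θ₁ < 2 * Real.pi)
    (ζ₁ ζ₂ : ℂ) (hζ₁ : ζ₁ = Complex.exp (θ₁ * Complex.I))
    (hζ₂ : ζ₂ = Complex.exp (θ₂ * Complex.I)) (hne : ζ₁ ≠ ζ₂)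
    (I : Set ℂ) (hI : I = (fun θ : ℝ => Complex.exp (θ * Complex.I)) '' Set.Icc θ₁ θ₂)
    (f : ℂ → ℂ) (hf : DifferentiableOn ℂ f (Metric.ball (0 : ℂ) 1))
    (hrad : ∀ r : ℝ, 0 ≤ r → r < 1 →
      ‖f ((r : ℂ) * ζ₁)‖ ≤ Real.exp (h ((r : ℂ) * ζ₁)) ∧
      ‖f ((r : ℂ) * ζ₂)‖ ≤ Real.exp (h ((r : ℂ) * ζ₂)))
    (rn : ℕ → ℝ) (hrn0 : ∀ n, 0 ≤ rn n) (hrn1 : ∀ n, rn n < 1)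
    (hrnlim : Tendsto rn atTop (nhds 1))
    (harc : ∀ n, ∀ ζ ∈ I, ‖f ((rn n : ℂ) * ζ)‖ ≤ 1) :
    ∀ r : ℝ, 0 ≤ r → r < 1 → ∀ ζ ∈ I,
      ‖f ((r : ℂ) * ζ)‖ ≤ Real.exp (h ((r : ℂ) * ζ)) :=
  stmt16_general h hharm hpos θ₁ θ₂ ζ₁ ζ₂ hζ₁ hζ₂ I hI f hf hrad rn hrn1 hrnlim harc
end
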